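/- Let A ∈ ℝ^{m×m}, B ∈ ℝ^{m×1}, C ∈ ℝ^{1×m}, ε > 0, M > 0. Suppose P is an m×m symmetric positive definite matrix and L ∈ ℝ^{p×m} satisfy PA + AᵀP = −LᵀL − (ε/2)P and PB = Cᵀ. Let n : ℝ × ℝ → ℝ be continuous and satisfy n(t, y)·y > −M for all t and y. Let x : [0, ∞) → ℝ^m be differentiable with x'(t) = A x(t) − B n(t, C x(t)) for all t ≥ 0. Then for every η > 0 there exists t_η ≥ 0 such that (1/2) x(t_η)ᵀ P x(t_η) ≤ 2M/ε + η. -/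

import Mathlib

/-!
With `V(x) = ½ xᵀPx`, the KYP equalities give along trajectories
`V' = -½ |Lx|² - (ε/2) V - n(t, y) y < M - (ε/2) V`. As long as the state stays outside `Ω`
this is at most `-εη/2`, so `V` would fall below any bound in finite time, contradicting
`V > 2M/ε + η` outside `Ω`.
-/

open Matrix

section Calculus

variable {𝕜 : Type*} [NontriviallyNormedField 𝕜] {ι κ : Type*} [Fintype ι] {t : 𝕜}

theorem HasDerivAt.dotProduct {u v : 𝕜 → ι → 𝕜} {u' v' : ι → 𝕜}
    (hu : HasDerivAt u u' t) (hv : HasDerivAt v v' t) :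
    HasDerivAt (fun s => u s ⬝ᵥ v s) (u' ⬝ᵥ v t + u t ⬝ᵥ v') t := by
  unfold _root_.dotProduct
  rw [← Finset.sum_add_distrib]
  exact .fun_sum fun i _ => (hasDerivAt_pi.mp hu i).mul (hasDerivAt_pi.mp hv i)

theorem HasDerivAt.const_mulVec (M : Matrix κ ι 𝕜) {u : 𝕜 → ι → 𝕜} {u' : ι → 𝕜}
    (hu : HasDerivAt u u' t) : HasDerivAt (fun s => M *ᵥ u s) (M *ᵥ u') t :=
  hasDerivAt_pi.mpr fun _ => .fun_sum fun j _ => (hasDerivAt_pi.mp hu j).const_mul _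

theorem HasDerivAt.dotProduct_mulVec_self {P : Matrix ι ι 𝕜} (hP : P.IsSymm)
    {u : 𝕜 → ι → 𝕜} {u' : ι → 𝕜} (hu : HasDerivAt u u' t) :
    HasDerivAt (fun s => u s ⬝ᵥ P *ᵥ u s) (2 * (u t ⬝ᵥ P *ᵥ u')) t := by
  convert hu.dotProduct (hu.const_mulVec P) using 1
  rw [← dotProduct_transpose_mulVec, hP.eq, two_mul]

end Calculus

theorem exists_le_of_hasDerivAt_le_neg {f f' : ℝ → ℝ} {a K : ℝ} (hK : 0 < K)
    (hf : ∀ t, a ≤ t → HasDerivAt f (f' t) t) (hf' : ∀ t, a ≤ t → f' t ≤ -K) (c : ℝ) :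
    ∃ t, a ≤ t ∧ f t ≤ c := by
  have hdecay : ∀ t, a ≤ t → f t - f a ≤ -K * (t - a) := fun t ht =>
    (convex_Ici a).image_sub_le_mul_sub_of_deriv_le
      (fun s hs => (hf s hs).continuousAt.continuousWithinAt)
      (fun s hs => (hf s (interior_subset hs)).differentiableAt.differentiableWithinAt)
      (fun s hs => (hf s (interior_subset hs)).deriv ▸ hf' s (interior_subset hs))
      a Set.self_mem_Ici t ht ht
  set T := max 0 ((f a - c) / K)
  refine ⟨a + T, by simp [T], ?_⟩
  have hT : f a - c ≤ K * T := by
    rw [← div_le_iff₀' hK]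
    exact le_max_right _ _
  linarith [hdecay (a + T) (by simp [T])]

section KYP

variable {ι ι' : Type*} [Fintype ι] [Fintype ι'] {A P : Matrix ι ι ℝ} {L : Matrix ι' ι ℝ}
  {B C : ι → ℝ} {ε : ℝ}

theorem dotProduct_mulVec_mulVec_le_of_kyp (hP : P.IsSymm)
    (hKYP : P * A + Aᵀ * P = -(Lᵀ * L) - (ε / 2) • P) (u : ι → ℝ) :
    u ⬝ᵥ P *ᵥ (A *ᵥ u) ≤ -(ε / 4) * (u ⬝ᵥ P *ᵥ u) := by
  have hsum : 2 * (u ⬝ᵥ P *ᵥ (A *ᵥ u)) = u ⬝ᵥ (P * A + Aᵀ * P) *ᵥ u := by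
    have hsymm : Aᵀ * P = (P * A)ᵀ := by rw [transpose_mul, hP.eq]
    rw [add_mulVec, dotProduct_add, hsymm, dotProduct_transpose_mulVec, ← mulVec_mulVec, two_mul]
  have hL : 0 ≤ u ⬝ᵥ (Lᵀ * L) *ᵥ u := by
    rw [← mulVec_mulVec, dotProduct_transpose_mulVec]
    exact Fintype.sum_nonneg fun _ => mul_self_nonneg _
  rw [hKYP, sub_mulVec, neg_mulVec, smul_mulVec, dotProduct_sub, dotProduct_neg,
    dotProduct_smul, smul_eq_mul] at hsum
  linarith

theorem dotProduct_mulVec_lure_lt (hP : P.IsSymm)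
    (hKYP1 : P * A + Aᵀ * P = -(Lᵀ * L) - (ε / 2) • P) (hKYP2 : P *ᵥ B = C)
    {u : ι → ℝ} {a M : ℝ} (hsector : -M < a * (C ⬝ᵥ u)) :
    u ⬝ᵥ P *ᵥ (A *ᵥ u - a • B) < M - ε / 2 * (1 / 2 * (u ⬝ᵥ P *ᵥ u)) := by
  rw [mulVec_sub, dotProduct_sub, mulVec_smul, hKYP2, dotProduct_smul, smul_eq_mul,
    dotProduct_comm u C]
  linarith [dotProduct_mulVec_mulVec_le_of_kyp hP hKYP1 u]

end KYP

theorem lure_finite_time_entry_general {m p : ℕ}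
    (A : Matrix (Fin m) (Fin m) ℝ) (B : Fin m → ℝ) (C : Fin m → ℝ)
    (ε M : ℝ) (hε : 0 < ε)
    (P : Matrix (Fin m) (Fin m) ℝ) (hP : P.PosDef)
    (L : Matrix (Fin p) (Fin m) ℝ)
    (hKYP1 : P * A + Aᵀ * P = -(Lᵀ * L) - (ε / 2) • P)
    (hKYP2 : P.mulVec B = C)
    (n : ℝ → ℝ → ℝ)
    (hsector : ∀ t y, -M < n t y * y)
    (x : ℝ → Fin m → ℝ)
    (hx : ∀ t, 0 ≤ t → HasDerivAt x (A.mulVec (x t) - n t (C ⬝ᵥ x t) • B) t) :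
    ∀ η > (0 : ℝ), ∃ tη, 0 ≤ tη ∧
      (1 / 2) * (x tη ⬝ᵥ P.mulVec (x tη)) ≤ 2 * M / ε + η := by
  intro η hη
  have hPsymm : P.IsSymm := isHermitian_iff_isSymm.mp hP.isHermitian
  by_contra! houtside
  have hV (t : ℝ) (ht : 0 ≤ t) : HasDerivAt (fun s => 1 / 2 * (x s ⬝ᵥ P *ᵥ x s))
      (x t ⬝ᵥ P *ᵥ (A *ᵥ x t - n t (C ⬝ᵥ x t) • B)) t :=
    (((hx t ht).dotProduct_mulVec_self hPsymm).const_mul _).congr_deriv (by ring)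
  have hdecay (t : ℝ) (ht : 0 ≤ t) :
      x t ⬝ᵥ P *ᵥ (A *ᵥ x t - n t (C ⬝ᵥ x t) • B) ≤ -(ε * η / 2) := by
    have hεM : ε / 2 * (2 * M / ε) = M := by field_simp
    linarith [dotProduct_mulVec_lure_lt hPsymm hKYP1 hKYP2 (hsector t (C ⬝ᵥ x t)),
      mul_lt_mul_of_pos_left (houtside t ht) (half_pos hε)]
  obtain ⟨t, ht, hle⟩ :=
    exists_le_of_hasDerivAt_le_neg (by positivity) hV hdecay (2 * M / ε + η)
  exact (houtside t ht).not_ge hle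

/-- Lemma 1 (finite-time entry part) for a Lur'e system `x' = A x - B n(t, Cx)`
with strictly proper linear block: under the ε-KYP conditions
`PA + AᵀP = -LᵀL - (ε/2)P`, `PB = Cᵀ` and the bound `n(t,y)·y > -M`,
the state enters `{x : (1/2) xᵀPx ≤ 2M/ε + η}` in finite time. -/
theorem lure_finite_time_entry {m p : ℕ}
    (A : Matrix (Fin m) (Fin m) ℝ) (B : Fin m → ℝ) (C : Fin m → ℝ)
    (ε M : ℝ) (hε : 0 < ε) (hM : 0 < M)
    (P : Matrix (Fin m) (Fin m) ℝ) (hP : P.PosDef)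
    (L : Matrix (Fin p) (Fin m) ℝ)
    (hKYP1 : P * A + Aᵀ * P = -(Lᵀ * L) - (ε / 2) • P)
    (hKYP2 : P.mulVec B = C)
    (n : ℝ → ℝ → ℝ) (hn : Continuous fun q : ℝ × ℝ => n q.1 q.2)
    (hsector : ∀ t y, -M < n t y * y)
    (x : ℝ → Fin m → ℝ)
    (hx : ∀ t, 0 ≤ t → HasDerivAt x (A.mulVec (x t) - n t (C ⬝ᵥ x t) • B) t) :
    ∀ η > (0 : ℝ), ∃ tη, 0 ≤ tη ∧
      (1 / 2) * (x tη ⬝ᵥ P.mulVec (x tη)) ≤ 2 * M / ε + η :=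
  lure_finite_time_entry_general A B C ε M hε P hP L hKYP1 hKYP2 n hsector x hx
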